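/- arXiv:1807.09139 — 5 statements merged into one kernel-verified Lean document; each statement's English description precedes it below -/
import Mathlib

section
/- Let f ∈ U_i(n,q) be an eigenfunction of H(n,q) for eigenvalue n(q-1)-qi, let 1 ≤ r ≤ n and k,m ∈ Σ_q. Then the function f_k^r - f_m^r on Σ_q^{n-1} obtained by restricting f to the hyperplanes x_r = k and x_r = m and subtracting, lies in U_{i-1}(n-1,q), i.e., satisfies the eigenfunction equation for eigenvalue (n-1)(q-1)-q(i-1) on H(n-1,q). -/
/-- Sum of `f` over the neighbors of `x` in the Hamming graph `H(n,q)`. -/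
noncomputable def adjSum (n q : ℕ) (f : (Fin n → Fin q) → ℝ) (x : Fin n → Fin q) : ℝ :=
  ∑ y : Fin n → Fin q, if hammingDist x y = 1 then f y else 0

/-- `f` satisfies the eigenfunction equation for eigenvalue `lam` on `H(n,q)`. -/
def IsEigenfun (n q : ℕ) (lam : ℝ) (f : (Fin n → Fin q) → ℝ) : Prop :=
  ∀ x, adjSum n q f x = lam * f x

/-- `f ∈ U_i(n,q)`, the eigenspace for eigenvalue `n(q-1) - q i`. -/
def memU (n q i : ℕ) (f : (Fin n → Fin q) → ℝ) : Prop :=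
  IsEigenfun n q ((n : ℝ) * ((q : ℝ) - 1) - (q : ℝ) * (i : ℝ)) f

/-- `f ∈ U_{[i,j]}(n,q) = U_i ⊕ ⋯ ⊕ U_j`. -/
def memUI (n q i j : ℕ) (f : (Fin n → Fin q) → ℝ) : Prop :=
  ∃ g : ℕ → (Fin n → Fin q) → ℝ,
    (∀ t ∈ Finset.Icc i j, memU n q t (g t)) ∧ f = ∑ t ∈ Finset.Icc i j, g t

/-- The cardinality of the support of `f : Σ_q^n → ℝ`. -/
noncomputable def suppCard (n q : ℕ) (f : (Fin n → Fin q) → ℝ) : ℕ :=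
  Nat.card {x : Fin n → Fin q // f x ≠ 0}

/-! Split the neighbours of a point `x` of the layer `x_r = k` of `H(n+1,q)` into its `q - 1`
neighbours along coordinate `r` and its neighbours inside the layer, a copy of `H(n,q)`. The
first group contributes `∑ⱼ f(x_r ↦ j) - f(x)`; its sum part does not depend on `k` and cancels
in `f_k^r - f_m^r`, while `-f(x)` moves the eigenvalue from `(n+1)(q-1) - q i` to
`(n+1)(q-1) - q i + 1 = n(q-1) - q(i-1)`. -/

lemma hammingDist_insertNth {α : Type*} [DecidableEq α] {n : ℕ} (r : Fin (n + 1)) (a b : α)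
    (x y : Fin n → α) :
    hammingDist (r.insertNth a x : Fin (n + 1) → α) (r.insertNth b y)
      = (if a = b then 0 else 1) + hammingDist x y := by
  simp only [hammingDist, Finset.card_filter]
  rw [Fin.sum_univ_succAbove _ r]
  simp [Fin.insertNth_apply_succAbove, ite_not]

lemma adjSum_sub (n q : ℕ) (f g : (Fin n → Fin q) → ℝ) (x : Fin n → Fin q) :
    adjSum n q (fun y => f y - g y) x = adjSum n q f x - adjSum n q g x := by
  simp only [adjSum, ← Finset.sum_sub_distrib]
  exact Finset.sum_congr rfl fun y _ => by split_ifs <;> simp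

section Layers

variable {n q : ℕ} (f : (Fin (n + 1) → Fin q) → ℝ) (r : Fin (n + 1)) (y : Fin n → Fin q)

lemma sum_neighbours_in_same_layer (k : Fin q) :
    (∑ z : Fin n → Fin q,
      if hammingDist (r.insertNth k y : Fin (n + 1) → Fin q) (r.insertNth k z) = 1
        then f (r.insertNth k z) else 0)
      = adjSum n q (fun z => f (r.insertNth k z)) y := by
  simp [adjSum, hammingDist_insertNth]

lemma sum_neighbours_in_other_layer {j k : Fin q} (hjk : j ≠ k) :
    (∑ z : Fin n → Fin q,
      if hammingDist (r.insertNth k y : Fin (n + 1) → Fin q) (r.insertNth j z) = 1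
        then f (r.insertNth j z) else 0)
      = f (r.insertNth j y) := by
  have hdist : ∀ z, hammingDist (r.insertNth k y : Fin (n + 1) → Fin q) (r.insertNth j z) = 1
      ↔ y = z := fun z => by
    rw [hammingDist_insertNth, if_neg hjk.symm, add_eq_left, hammingDist_eq_zero]
  simp only [hdist, Finset.sum_ite_eq, Finset.mem_univ, if_true]

lemma adjSum_insertNth (k : Fin q) :
    adjSum (n + 1) q f (r.insertNth k y)
      = (∑ j : Fin q, f (r.insertNth j y)) - f (r.insertNth k y)
        + adjSum n q (fun z => f (r.insertNth k z)) y := by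
  have hlayers : adjSum (n + 1) q f (r.insertNth k y)
      = ∑ j : Fin q, ∑ z : Fin n → Fin q,
          if hammingDist (r.insertNth k y : Fin (n + 1) → Fin q) (r.insertNth j z) = 1
            then f (r.insertNth j z) else 0 := by
    rw [adjSum, ← (Fin.insertNthEquiv (fun _ => Fin q) r).sum_comp, Fintype.sum_prod_type]
    rfl
  rw [hlayers, ← Finset.add_sum_erase _ _ (Finset.mem_univ k),
    sum_neighbours_in_same_layer, ← Finset.sum_erase_eq_sub (Finset.mem_univ k),
    Finset.sum_congr rfl fun j hj =>
      sum_neighbours_in_other_layer f r y (Finset.ne_of_mem_erase hj)]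
  ring

end Layers

/-- for f ∈ U_i(n+1,q), the difference of restrictions
`f_k^r - f_m^r` lies in U_{i-1}(n,q). -/
theorem restriction_diff_memU (n q i : ℕ) (f : (Fin (n + 1) → Fin q) → ℝ)
    (hf : memU (n + 1) q i f) (r : Fin (n + 1)) (k m : Fin q) :
    IsEigenfun n q ((n : ℝ) * ((q : ℝ) - 1) - (q : ℝ) * ((i : ℝ) - 1))
      (fun y => f (r.insertNth k y) - f (r.insertNth m y)) := by
  intro y
  have hk := hf (r.insertNth k y)
  have hm := hf (r.insertNth m y)
  rw [adjSum_insertNth] at hk hm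
  rw [adjSum_sub]
  push_cast at hk hm
  linear_combination hk - hm
end

section
/- Let f ∈ U_i(n,q) be an eigenfunction of H(n,q) for eigenvalue n(q-1)-qi and let 1 ≤ r ≤ n. Then the function Σ_{k=0}^{q-1} f_k^r on Σ_q^{n-1} lies in U_i(n-1,q), i.e., satisfies the eigenfunction equation for eigenvalue (n-1)(q-1)-qi on H(n-1,q). -/
lemma hd_insertNth {n q : ℕ} (r : Fin (n+1)) (k k' : Fin q) (y y' : Fin n → Fin q) :
    hammingDist (r.insertNth k y : Fin (n+1) → Fin q) (r.insertNth k' y')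
      = (if k = k' then 0 else 1) + hammingDist y y' := by
  simp only [hammingDist, Finset.card_filter]
  rw [Fin.sum_univ_succAbove _ r]
  simp [Fin.insertNth_apply_same, Fin.insertNth_apply_succAbove, ite_not]

/-- for f ∈ U_i(n+1,q), the sum of restrictions `Σ_k f_k^r`
lies in U_i(n,q). -/
theorem restriction_sum_memU (n q i : ℕ) (f : (Fin (n + 1) → Fin q) → ℝ)
    (hf : memU (n + 1) q i f) (r : Fin (n + 1)) :
    memU n q i (fun y => ∑ k : Fin q, f (r.insertNth k y)) := by
  intro y
  set lam : ℝ := ((n + 1 : ℕ) : ℝ) * ((q : ℝ) - 1) - (q : ℝ) * (i : ℝ) with hlam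
  have reindex : ∀ k : Fin q, adjSum (n+1) q f (r.insertNth k y)
      = ∑ k' : Fin q, ∑ y' : Fin n → Fin q,
          (if hammingDist (r.insertNth k y : Fin (n+1) → Fin q) (r.insertNth k' y') = 1
            then f (r.insertNth k' y') else 0) := by
    intro k
    rw [adjSum, ← Equiv.sum_comp (Fin.insertNthEquiv (fun _ => Fin q) r), Fintype.sum_prod_type]
    rfl
  have step : ∀ k : Fin q, adjSum (n+1) q f (r.insertNth k y)
      = (∑ y' : Fin n → Fin q, if hammingDist y y' = 1 then f (r.insertNth k y') else 0)
        + ∑ k' : Fin q, (if k = k' then 0 else f (r.insertNth k' y)) := by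
    intro k
    rw [reindex k]
    have inner : ∀ k' : Fin q, (∑ y' : Fin n → Fin q,
        if hammingDist (r.insertNth k y : Fin (n+1) → Fin q) (r.insertNth k' y') = 1
          then f (r.insertNth k' y') else 0)
        = if k = k' then (∑ y' : Fin n → Fin q,
            if hammingDist y y' = 1 then f (r.insertNth k' y') else 0)
          else f (r.insertNth k' y) := by
      intro k'
      by_cases h : k = k'
      · simp [hd_insertNth, h]
      · simp only [if_neg h]
        have hc : ∀ y' : Fin n → Fin q,
            (hammingDist (r.insertNth k y : Fin (n+1) → Fin q) (r.insertNth k' y') = 1)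
              ↔ y' = y := by
          intro y'
          rw [hd_insertNth, if_neg h]
          constructor
          · intro hh
            have h0 : hammingDist y y' = 0 := by omega
            exact (hammingDist_eq_zero.mp h0).symm
          · intro hh; subst hh; simp
        simp only [hc]
        rw [Finset.sum_ite_eq' Finset.univ y (fun y' => f (r.insertNth k' y'))]
        simp
    rw [Finset.sum_congr rfl (fun k' _ => inner k')]
    have split : ∀ k' : Fin q,
        (if k = k' then (∑ y' : Fin n → Fin q,
            if hammingDist y y' = 1 then f (r.insertNth k' y') else 0)
          else f (r.insertNth k' y))
        = (if k = k' then (∑ y' : Fin n → Fin q,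
            if hammingDist y y' = 1 then f (r.insertNth k' y') else 0) else 0)
          + (if k = k' then 0 else f (r.insertNth k' y)) := by
      intro k'; split_ifs <;> ring
    rw [Finset.sum_congr rfl (fun k' _ => split k'), Finset.sum_add_distrib,
      Finset.sum_ite_eq Finset.univ k]
    simp
  have sumA : ∑ k : Fin q, (∑ y' : Fin n → Fin q,
        if hammingDist y y' = 1 then f (r.insertNth k y') else 0)
      = adjSum n q (fun y => ∑ k : Fin q, f (r.insertNth k y)) y := by
    rw [adjSum, Finset.sum_comm]
    refine Finset.sum_congr rfl fun y' _ => ?_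
    by_cases h : hammingDist y y' = 1 <;> simp [h]
  have sumB : ∑ k : Fin q, ∑ k' : Fin q, (if k = k' then 0 else f (r.insertNth k' y))
      = ((q : ℝ) - 1) * ∑ k : Fin q, f (r.insertNth k y) := by
    rw [Finset.sum_comm, Finset.mul_sum]
    refine Finset.sum_congr rfl fun k' _ => ?_
    have h1 : ∀ k : Fin q, (if k = k' then 0 else f (r.insertNth k' y))
        = f (r.insertNth k' y) - (if k = k' then f (r.insertNth k' y) else 0) := by
      intro k; split_ifs <;> ring
    rw [Finset.sum_congr rfl (fun k _ => h1 k), Finset.sum_sub_distrib, Finset.sum_const,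
      Finset.sum_ite_eq' Finset.univ k' (fun _ => f (r.insertNth k' y))]
    simp [Finset.card_univ]
    ring
  have key : lam * (∑ k : Fin q, f (r.insertNth k y))
      = adjSum n q (fun y => ∑ k : Fin q, f (r.insertNth k y)) y
        + ((q : ℝ) - 1) * ∑ k : Fin q, f (r.insertNth k y) := by
    rw [← sumA, ← sumB, ← Finset.sum_add_distrib, Finset.mul_sum]
    exact Finset.sum_congr rfl fun k _ => by rw [← hf (r.insertNth k y), step k]
  show adjSum n q (fun y => ∑ k : Fin q, f (r.insertNth k y)) y
      = ((n : ℝ) * ((q : ℝ) - 1) - (q : ℝ) * (i : ℝ)) * ∑ k : Fin q, f (r.insertNth k y)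
  rw [hlam] at key
  push_cast at key
  linarith [key]
end

section
/- Let q ≥ 2 and let f: Σ_q^n → ℝ and r ∈ {1,...,n} be such that f_0^r = f_1^r = ... = f_{q-2}^r. Then |f| ≥ (q-2)·|f_0^r| + |f_{q-2}^r - f_{q-1}^r|, where |g| denotes the number of nonzeros of g. -/
open Finset

lemma suppCard_eq (n q : ℕ) (f : (Fin n → Fin q) → ℝ) :
    suppCard n q f = (univ.filter (fun x => f x ≠ 0)).card := by
  rw [suppCard, Nat.card_eq_fintype_card, Fintype.card_subtype]

lemma suppCard_sub_le (n q : ℕ) (g h : (Fin n → Fin q) → ℝ) :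
    suppCard n q (fun y => g y - h y) ≤ suppCard n q g + suppCard n q h := by
  rw [suppCard_eq, suppCard_eq, suppCard_eq]
  refine le_trans (Finset.card_le_card ?_) (Finset.card_union_le _ _)
  intro x hx
  simp only [mem_filter, mem_union, mem_univ, true_and] at hx ⊢
  by_contra hc
  push_neg at hc
  simp [hc.1, hc.2] at hx

lemma suppCard_slice (n q : ℕ) (f : (Fin (n + 1) → Fin q) → ℝ) (r : Fin (n + 1)) :
    suppCard (n + 1) q f = ∑ k : Fin q, suppCard n q (fun y => f (r.insertNth k y)) := by
  simp only [suppCard, Nat.card_eq_fintype_card]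
  rw [← Fintype.card_sigma]
  refine Fintype.card_congr ?_
  exact ((Fin.insertNthEquiv (fun _ => Fin q) r).symm.subtypeEquiv (fun x => by
      simp [Fin.insertNthEquiv, Fin.insertNth_self_removeNth])).trans
    (Equiv.subtypeProdEquivSigmaSubtype (fun k y => f (r.insertNth k y) ≠ 0))

set_option maxHeartbeats 2000000 in
/-- if `f_0^r = ⋯ = f_{q-2}^r`, then
`|f| ≥ (q-2)|f_0^r| + |f_{q-2}^r - f_{q-1}^r|`. -/
theorem support_lower_bound (n q : ℕ) (hq : 2 ≤ q) (f : (Fin (n + 1) → Fin q) → ℝ)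
    (r : Fin (n + 1))
    (h : ∀ k m : Fin q, (k : ℕ) < q - 1 → (m : ℕ) < q - 1 →
      (fun y => f (r.insertNth k y)) = (fun y => f (r.insertNth m y))) :
    (q - 2) * suppCard n q (fun y => f (r.insertNth ⟨0, by omega⟩ y)) +
      suppCard n q (fun y =>
        f (r.insertNth ⟨q - 2, by omega⟩ y) - f (r.insertNth ⟨q - 1, by omega⟩ y))
      ≤ suppCard (n + 1) q f := by
  rw [suppCard_slice n q f r]
  have h0 : ((⟨0, by omega⟩ : Fin q) : ℕ) < q - 1 := by simp; omega
  have hslice : ∀ k : Fin q, (k : ℕ) < q - 1 →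
      suppCard n q (fun y => f (r.insertNth k y)) =
      suppCard n q (fun y => f (r.insertNth ⟨0, by omega⟩ y)) :=
    fun k hk => congrArg (suppCard n q) (h k ⟨0, by omega⟩ hk h0)
  have hsum : ∑ k : Fin q, suppCard n q (fun y => f (r.insertNth k y))
      = (q - 1) * suppCard n q (fun y => f (r.insertNth ⟨0, by omega⟩ y))
        + suppCard n q (fun y => f (r.insertNth ⟨q - 1, by omega⟩ y)) := by
    rw [← Finset.sum_erase_add _ _ (Finset.mem_univ (⟨q - 1, by omega⟩ : Fin q))]
    congr 1
    rw [Finset.sum_congr rfl (fun k hk => hslice k ?_)]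
    · rw [Finset.sum_const, smul_eq_mul]
      congr 1
      rw [Finset.card_erase_of_mem (Finset.mem_univ _), Finset.card_univ, Fintype.card_fin]
    · simp only [Finset.mem_erase, Finset.mem_univ, and_true] at hk
      have : (k : ℕ) ≠ q - 1 := fun hc => hk (by ext; simpa using hc)
      omega
  rw [hsum]
  have h1 := suppCard_sub_le n q (fun y => f (r.insertNth ⟨q - 2, by omega⟩ y))
    (fun y => f (r.insertNth ⟨q - 1, by omega⟩ y))
  have h2 : suppCard n q (fun y => f (r.insertNth ⟨q - 2, by omega⟩ y)) =
      suppCard n q (fun y => f (r.insertNth ⟨0, by omega⟩ y)) :=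
    hslice _ (by simp; omega)
  have hm : (q - 1) * suppCard n q (fun y => f (r.insertNth ⟨0, by omega⟩ y))
      = (q - 2) * suppCard n q (fun y => f (r.insertNth ⟨0, by omega⟩ y))
        + suppCard n q (fun y => f (r.insertNth ⟨0, by omega⟩ y)) := by
    generalize suppCard n q (fun y => f (r.insertNth ⟨0, by omega⟩ y)) = A
    have hq1 : q - 1 = (q - 2) + 1 := by omega
    rw [hq1, Nat.succ_mul]
  rw [hm]
  rw [h2] at h1
  omega
end

section
/- Let q ≥ 3, 0 ≤ i ≤ j ≤ n with n ≥ i+j, and let f: Σ_q^n → ℝ be a nonzero function in U_{[i,j]}(n,q). Then the support of f has cardinality at least 2^i (q-1)^i q^{n-i-j}. -/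
/-!
Induction on `n`, cutting `f : Σ_q^{n+1} → ℝ` into its slices `f_k = f(k, ·)` on `Σ_q^n`, so that
`|f| = ∑ₖ |f_k|`. Comparing the adjacency operators of `H(n+1,q)` and `H(n,q)` shows that for
`f ∈ U_t(n+1,q)` the sum `∑ₖ f_k` lies in `U_t(n,q)` and each difference `f_a - f_b` in
`U_{t-1}(n,q)`, the latter being `0` when `t = 0` because `n(q-1) + q` exceeds every eigenvalue
of `H(n,q)`; writing `q f_k = ∑ₘ f_m + ∑ₘ (f_k - f_m)` then puts every slice in `U_{[i-1,j]}`.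

The bound `B(i,j,n) = (2(q-1))^i q^(n-i-j)` is proved as a real number for all `i, j, n`.
If all slices are nonzero, they are at least `B(i-1,j,n)` each and a difference of two distinct
ones is at least `q B(i-1,j,n)`, so `|f| ≥ |f_{k₁}| + (q-1)|f_{k₀}| ≥ (2q-2) B(i-1,j,n)` for a
minimal slice `f_{k₀}` (for `i = 0`, or if all slices agree, `q B(i,j,n)` is immediate). If some
slice vanishes, all slices lie in `U_{[i-1,j-1]}`: either two are nonzero, or the only nonzero
one equals `∑ₖ f_k` and so lies in `U_{[i,j]} ∩ U_{[i-1,j-1]} = U_{[i,j-1]}` by the independence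
of eigenspaces.
-/

namespace Hamming

open Finset Module

variable {n q : ℕ}

noncomputable def adjacency (n q : ℕ) : End ℝ ((Fin n → Fin q) → ℝ) where
  toFun := adjSum n q
  map_add' f g := by
    ext x
    simp only [adjSum, Pi.add_apply, ← sum_add_distrib, ite_add_ite, add_zero]
  map_smul' c f := by
    ext x
    simp only [adjSum, Pi.smul_apply, smul_eq_mul, RingHom.id_apply, mul_sum, mul_ite, mul_zero]

theorem adjacency_apply (f : (Fin n → Fin q) → ℝ) (x : Fin n → Fin q) :
    adjacency n q f x = adjSum n q f x := rfl

theorem adjacency_dim_zero : adjacency 0 q = 0 := by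
  ext f x
  have hx : ∀ y : Fin 0 → Fin q, hammingDist x y = 0 := fun y => by simp [Subsingleton.elim x y]
  simp [adjacency_apply, adjSum, hx]

theorem eigenspace_adjacency_dim_zero {μ : ℝ} (hμ : μ ≠ 0) :
    (adjacency 0 q).eigenspace μ = ⊥ := by
  refine eq_bot_iff.2 fun f hf => ?_
  rw [End.mem_eigenspace_iff, adjacency_dim_zero, LinearMap.zero_apply, eq_comm,
    smul_eq_zero] at hf
  exact hf.resolve_left hμ

def slice (k : Fin q) : ((Fin (n + 1) → Fin q) → ℝ) →ₗ[ℝ] (Fin n → Fin q) → ℝ :=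
  LinearMap.funLeft ℝ ℝ fun y => (Fin.cons k y : Fin (n + 1) → Fin q)

def sliceSum : ((Fin (n + 1) → Fin q) → ℝ) →ₗ[ℝ] (Fin n → Fin q) → ℝ :=
  ∑ k, slice k

theorem slice_apply (k : Fin q) (f : (Fin (n + 1) → Fin q) → ℝ) (y : Fin n → Fin q) :
    slice k f y = f (Fin.cons k y) := rfl

theorem sliceSum_apply (f : (Fin (n + 1) → Fin q) → ℝ) :
    sliceSum f = ∑ k, slice k f := LinearMap.sum_apply _ _ _

theorem eq_zero_of_forall_slice_eq_zero {f : (Fin (n + 1) → Fin q) → ℝ}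
    (h : ∀ k, slice k f = 0) : f = 0 := by
  funext x
  simpa [slice_apply] using congrFun (h (x 0)) (Fin.tail x)

theorem sliceSum_eq_smul_of_forall_slice_eq {f : (Fin (n + 1) → Fin q) → ℝ} {k : Fin q}
    (h : ∀ m, slice m f = slice k f) : sliceSum f = (q : ℝ) • slice k f := by
  simp [sliceSum_apply, h, ← Nat.cast_smul_eq_nsmul ℝ]

theorem sum_univ_eq_sum_cons {M : Type*} [AddCommMonoid M] (F : (Fin (n + 1) → Fin q) → M) :
    ∑ x, F x = ∑ k, ∑ y, F (Fin.cons k y) := by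
  rw [← Fintype.sum_prod_type']
  exact (Fintype.sum_equiv (Fin.consEquiv fun _ => Fin q) _ _ fun _ => rfl).symm

theorem hammingDist_cons (a b : Fin q) (y z : Fin n → Fin q) :
    hammingDist (Fin.cons a y : Fin (n + 1) → Fin q) (Fin.cons b z) =
      (if a = b then 0 else 1) + hammingDist y z := by
  simp only [hammingDist, card_filter, Fin.sum_univ_succ, Fin.cons_zero, Fin.cons_succ,
    ite_not]

theorem adjSum_cons (f : (Fin (n + 1) → Fin q) → ℝ) (k : Fin q) (y : Fin n → Fin q) :
    adjSum (n + 1) q f (Fin.cons k y) =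
      adjSum n q (slice k f) y + (sliceSum f y - slice k f y) := by
  rw [adjSum, sum_univ_eq_sum_cons, ← add_sum_erase _ _ (mem_univ k), sliceSum_apply, Finset.sum_apply,
    ← sum_erase_eq_sub (mem_univ k)]
  congr 1
  · simp [adjSum, hammingDist_cons, slice_apply]
  · refine sum_congr rfl fun m hm => ?_
    simp [hammingDist_cons, (ne_of_mem_erase hm).symm, slice_apply, eq_comm]

variable {f : (Fin (n + 1) → Fin q) → ℝ} {μ : ℝ}

theorem adjacency_slice (hf : f ∈ (adjacency (n + 1) q).eigenspace μ) (k : Fin q) :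
    adjacency n q (slice k f) = (μ + 1) • slice k f - sliceSum f := by
  rw [End.mem_eigenspace_iff] at hf
  ext y
  have hy := congrFun hf (Fin.cons k y)
  rw [adjacency_apply, adjSum_cons, Pi.smul_apply, smul_eq_mul, ← slice_apply k f] at hy
  simp only [adjacency_apply, Pi.sub_apply, Pi.smul_apply, smul_eq_mul]
  linarith

theorem sliceSum_mem_eigenspace (hf : f ∈ (adjacency (n + 1) q).eigenspace μ) :
    sliceSum f ∈ (adjacency n q).eigenspace (μ + 1 - q) := by
  rw [End.mem_eigenspace_iff, sliceSum_apply, map_sum]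
  simp only [adjacency_slice hf]
  rw [sum_sub_distrib, ← smul_sum, sum_const, card_univ, Fintype.card_fin, ← sliceSum_apply,
    sub_smul, Nat.cast_smul_eq_nsmul]

theorem slice_sub_slice_mem_eigenspace (hf : f ∈ (adjacency (n + 1) q).eigenspace μ)
    (a b : Fin q) : slice a f - slice b f ∈ (adjacency n q).eigenspace (μ + 1) := by
  rw [End.mem_eigenspace_iff, map_sub, adjacency_slice hf, adjacency_slice hf, smul_sub]
  abel

theorem eigenspace_adjacency_eq_bot (n : ℕ) (hμ : n * ((q : ℝ) - 1) < μ) :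
    (adjacency n q).eigenspace μ = ⊥ := by
  induction n generalizing μ with
  | zero => exact eigenspace_adjacency_dim_zero (by simp at hμ; positivity)
  | succ n ih =>
    refine eq_bot_iff.2 fun g hg => eq_zero_of_forall_slice_eq_zero fun k => ?_
    have hq : (0 : ℝ) ≤ q := q.cast_nonneg
    have hsum : sliceSum g = 0 :=
      (Submodule.eq_bot_iff _).1 (ih (by push_cast at hμ; linarith)) _
        (sliceSum_mem_eigenspace hg)
    have hslice : ∀ m, slice m g = slice k g := fun m => sub_eq_zero.1 <|
      (Submodule.eq_bot_iff _).1 (ih (by push_cast at hμ; linarith)) _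
        (slice_sub_slice_mem_eigenspace hg m k)
    rw [sliceSum_eq_smul_of_forall_slice_eq hslice, smul_eq_zero] at hsum
    exact hsum.resolve_left (Nat.cast_ne_zero.2 k.pos.ne')

noncomputable def U (n q t : ℕ) : Submodule ℝ ((Fin n → Fin q) → ℝ) :=
  (adjacency n q).eigenspace (n * ((q : ℝ) - 1) - q * t)

noncomputable def UIcc (n q i j : ℕ) : Submodule ℝ ((Fin n → Fin q) → ℝ) :=
  ⨆ t ∈ Icc i j, U n q t

theorem mem_U_of_memU {t : ℕ} {g : (Fin n → Fin q) → ℝ} (hg : memU n q t g) : g ∈ U n q t :=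
  End.mem_eigenspace_iff.2 (funext hg)

theorem mem_UIcc_of_memUI {i j : ℕ} {g : (Fin n → Fin q) → ℝ} (hg : memUI n q i j g) :
    g ∈ UIcc n q i j := by
  obtain ⟨u, hu, rfl⟩ := hg
  exact Submodule.sum_mem_biSup fun t ht => mem_U_of_memU (hu t ht)

theorem U_le_UIcc {i j t : ℕ} (ht : t ∈ Icc i j) : U n q t ≤ UIcc n q i j :=
  le_iSup₂ (f := fun t (_ : t ∈ Icc i j) => U n q t) t ht

theorem iSupIndep_U (hq : q ≠ 0) : iSupIndep (U n q) :=
  (adjacency n q).eigenspaces_iSupIndep.comp fun s t hst => by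
    simpa [hq] using hst

theorem U_dim_zero_eq_bot {t : ℕ} (hq : q ≠ 0) (ht : t ≠ 0) : U 0 q t = ⊥ :=
  eigenspace_adjacency_dim_zero (by simp [hq, ht])

theorem UIcc_dim_zero_eq_bot {i j : ℕ} (hq : q ≠ 0) (hi : i ≠ 0) : UIcc 0 q i j = ⊥ :=
  iSup₂_eq_bot.2 fun t ht => U_dim_zero_eq_bot hq (by simp at ht; omega)

theorem UIcc_succ_inf_UIcc_le (hq : q ≠ 0) (i j : ℕ) :
    UIcc n q (i + 1) (j + 1) ⊓ UIcc n q i j ≤ UIcc n q (i + 1) j := by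
  have hsplit : UIcc n q (i + 1) (j + 1) ≤ UIcc n q (i + 1) j ⊔ U n q (j + 1) :=
    iSup₂_le fun t ht => by
      rcases eq_or_ne t (j + 1) with rfl | hne
      · exact le_sup_right
      · exact le_sup_of_le_left (U_le_UIcc (by simp at ht ⊢; omega))
  have hdisj : U n q (j + 1) ⊓ UIcc n q i j = ⊥ :=
    ((iSupIndep_U hq).disjoint_biSup (y := ↑(Icc i j)) (by simp)).eq_bot
  calc UIcc n q (i + 1) (j + 1) ⊓ UIcc n q i j
      ≤ (UIcc n q (i + 1) j ⊔ U n q (j + 1)) ⊓ UIcc n q i j := inf_le_inf_right _ hsplit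
    _ ≤ UIcc n q (i + 1) j ⊔ U n q (j + 1) ⊓ UIcc n q i j :=
        sup_inf_le_assoc_of_le _ (iSup₂_le fun t ht => U_le_UIcc (by simp at ht ⊢; omega))
    _ = UIcc n q (i + 1) j := by rw [hdisj, sup_bot_eq]

theorem sliceSum_mem_U {t : ℕ} (hf : f ∈ U (n + 1) q t) : sliceSum f ∈ U n q t := by
  rw [U] at hf ⊢
  convert sliceSum_mem_eigenspace hf using 2
  push_cast
  ring

theorem slice_sub_slice_mem_U {t : ℕ} (hf : f ∈ U (n + 1) q (t + 1)) (a b : Fin q) :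
    slice a f - slice b f ∈ U n q t := by
  rw [U] at hf ⊢
  convert slice_sub_slice_mem_eigenspace hf a b using 2
  push_cast
  ring

theorem slice_eq_slice_of_mem_U_zero (hf : f ∈ U (n + 1) q 0) (a b : Fin q) :
    slice a f = slice b f := by
  have hq : (1 : ℝ) ≤ q := by exact_mod_cast a.pos
  have hμ : n * ((q : ℝ) - 1) < (n + 1 : ℕ) * ((q : ℝ) - 1) - q * (0 : ℕ) + 1 := by
    push_cast
    linarith
  exact sub_eq_zero.1 <| (Submodule.eq_bot_iff _).1 (eigenspace_adjacency_eq_bot n hμ) _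
    (slice_sub_slice_mem_eigenspace hf a b)

theorem slice_mem_U_sup {t : ℕ} (hf : f ∈ U (n + 1) q t) (k : Fin q) :
    slice k f ∈ U n q t ⊔ U n q (t - 1) := by
  have hq : (q : ℝ) ≠ 0 := Nat.cast_ne_zero.2 k.pos.ne'
  have hdecomp : slice k f = (q : ℝ)⁻¹ • (sliceSum f + ∑ m, (slice k f - slice m f)) := by
    rw [sum_sub_distrib, sum_const, card_univ, Fintype.card_fin, ← sliceSum_apply,
      add_sub_cancel, ← Nat.cast_smul_eq_nsmul ℝ, smul_smul, inv_mul_cancel₀ hq, one_smul]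
  rw [hdecomp]
  refine Submodule.smul_mem _ _ (Submodule.add_mem_sup (sliceSum_mem_U hf)
    (Submodule.sum_mem _ fun m _ => ?_))
  cases t with
  | zero => simp [slice_eq_slice_of_mem_U_zero hf k m]
  | succ t => exact slice_sub_slice_mem_U hf k m

variable {i j : ℕ}

theorem sliceSum_mem_UIcc (hf : f ∈ UIcc (n + 1) q i j) : sliceSum f ∈ UIcc n q i j :=
  (iSup₂_le fun _ ht _ hg => U_le_UIcc ht (sliceSum_mem_U hg) :
    UIcc (n + 1) q i j ≤ (UIcc n q i j).comap sliceSum) hf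

theorem slice_sub_slice_mem_UIcc (hf : f ∈ UIcc (n + 1) q i j) (a b : Fin q) :
    slice a f - slice b f ∈ UIcc n q (i - 1) (j - 1) :=
  (iSup₂_le fun t ht _ hg => by
    cases t with
    | zero => simp [slice_eq_slice_of_mem_U_zero hg a b]
    | succ t =>
      exact U_le_UIcc (by simp at ht ⊢; omega) (slice_sub_slice_mem_U hg a b) :
    UIcc (n + 1) q i j ≤ (UIcc n q (i - 1) (j - 1)).comap (slice a - slice b)) hf

theorem slice_eq_slice_of_mem_UIcc_zero (hf : f ∈ UIcc (n + 1) q i 0) (a b : Fin q) :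
    slice a f = slice b f :=
  (iSup₂_le fun t ht _ hg => by
    obtain rfl : t = 0 := by simp at ht; omega
    exact slice_eq_slice_of_mem_U_zero hg a b :
    UIcc (n + 1) q i 0 ≤ LinearMap.eqLocus (slice a) (slice b)) hf

theorem slice_mem_UIcc (hf : f ∈ UIcc (n + 1) q i j) (k : Fin q) :
    slice k f ∈ UIcc n q (i - 1) j :=
  (iSup₂_le fun _ ht _ hg =>
    sup_le (U_le_UIcc (by simp at ht ⊢; omega)) (U_le_UIcc (by simp at ht ⊢; omega))
      (slice_mem_U_sup hg k) :
    UIcc (n + 1) q i j ≤ (UIcc n q (i - 1) j).comap (slice k)) hf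

theorem suppCard_eq_card (g : (Fin n → Fin q) → ℝ) : suppCard n q g = #{x | g x ≠ 0} := by
  rw [suppCard, Nat.card_eq_fintype_card, Fintype.card_subtype]

theorem suppCard_pos {g : (Fin n → Fin q) → ℝ} (hg : g ≠ 0) : 0 < suppCard n q g := by
  obtain ⟨x, hx⟩ := Function.ne_iff.1 hg
  rw [suppCard_eq_card]
  exact card_pos.2 ⟨x, by simpa using hx⟩

theorem suppCard_sub_le (g h : (Fin n → Fin q) → ℝ) :
    suppCard n q (g - h) ≤ suppCard n q g + suppCard n q h := by
  simp only [suppCard_eq_card]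
  refine (card_le_card fun x hx => ?_).trans (card_union_le _ _)
  simp only [mem_filter, mem_univ, true_and, mem_union, Pi.sub_apply] at hx ⊢
  by_contra! h0
  exact hx (by rw [h0.1, h0.2, sub_zero])

theorem suppCard_succ (f : (Fin (n + 1) → Fin q) → ℝ) :
    suppCard (n + 1) q f = ∑ k, suppCard n q (slice k f) := by
  rw [suppCard_eq_card, card_filter, sum_univ_eq_sum_cons]
  exact sum_congr rfl fun k _ => by rw [suppCard_eq_card, card_filter]; rfl

theorem suppCard_slice_le (k : Fin q) : suppCard n q (slice k f) ≤ suppCard (n + 1) q f := by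
  rw [suppCard_succ]
  exact single_le_sum (f := fun k => suppCard n q (slice k f)) (fun _ _ => Nat.zero_le _)
    (mem_univ k)

theorem suppCard_slice_add_slice_le {a b : Fin q} (hab : a ≠ b) :
    suppCard n q (slice a f) + suppCard n q (slice b f) ≤ suppCard (n + 1) q f := by
  rw [suppCard_succ, ← sum_pair (f := fun k => suppCard n q (slice k f)) hab]
  exact sum_le_sum_of_subset (subset_univ _)

theorem suppCard_slice_add_mul_le {k₀ : Fin q}
    (hk₀ : ∀ k, suppCard n q (slice k₀ f) ≤ suppCard n q (slice k f)) (k₁ : Fin q) :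
    suppCard n q (slice k₁ f) + (q - 1) * suppCard n q (slice k₀ f) ≤ suppCard (n + 1) q f := by
  rw [suppCard_succ, ← add_sum_erase _ _ (mem_univ k₁)]
  gcongr
  simpa [card_erase_of_mem] using
    card_nsmul_le_sum (univ.erase k₁) (fun k => suppCard n q (slice k f)) _ fun k _ => hk₀ k

noncomputable def suppBound (q i j n : ℕ) : ℝ :=
  (2 * ((q : ℝ) - 1)) ^ i * (q : ℝ) ^ n / (q : ℝ) ^ (i + j)

theorem suppBound_nonneg (hq : 1 ≤ q) (i j n : ℕ) : 0 ≤ suppBound q i j n := by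
  have : (0 : ℝ) ≤ q - 1 := sub_nonneg.2 (by exact_mod_cast hq)
  unfold suppBound
  positivity

theorem suppBound_dim_succ (i j n : ℕ) : suppBound q i j (n + 1) = q * suppBound q i j n := by
  simp only [suppBound, pow_succ]
  ring

theorem mul_suppBound_top_succ (hq : q ≠ 0) (i j n : ℕ) :
    q * suppBound q i (j + 1) n = suppBound q i j n := by
  have : (q : ℝ) ≠ 0 := by exact_mod_cast hq
  simp only [suppBound, ← add_assoc, pow_succ]
  field_simp

theorem suppBound_top_succ_dim_succ (hq : q ≠ 0) (i j n : ℕ) :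
    suppBound q i (j + 1) (n + 1) = suppBound q i j n := by
  rw [suppBound_dim_succ, mul_suppBound_top_succ hq]

theorem suppBound_succ_succ_succ (hq : q ≠ 0) (i j n : ℕ) :
    suppBound q (i + 1) (j + 1) (n + 1) = 2 * (q - 1) * suppBound q i (j + 1) n := by
  have : (q : ℝ) ≠ 0 := by exact_mod_cast hq
  simp only [suppBound, show i + 1 + (j + 1) = i + (j + 1) + 1 by ring, pow_succ]
  field_simp

theorem suppBound_eq (hq : 1 ≤ q) {i j n : ℕ} (h : i + j ≤ n) :
    suppBound q i j n = (2 ^ i * (q - 1) ^ i * q ^ (n - i - j) : ℕ) := by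
  have : (q : ℝ) ≠ 0 := by positivity
  obtain ⟨m, rfl⟩ : ∃ m, n = i + j + m := ⟨n - (i + j), by omega⟩
  rw [suppBound, show i + j + m - i - j = m by omega, pow_add, mul_pow]
  push_cast [hq]
  field_simp

def SuppBoundHolds (q n : ℕ) : Prop :=
  ∀ i j (g : (Fin n → Fin q) → ℝ), g ∈ UIcc n q i j → g ≠ 0 → suppBound q i j n ≤ suppCard n q g

theorem suppBoundHolds_zero (hq : q ≠ 0) : SuppBoundHolds q 0 := by
  intro i j g hg hg0
  obtain rfl : i = 0 := by
    by_contra hi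
    rw [UIcc_dim_zero_eq_bot hq hi] at hg
    exact hg0 hg
  have hq1 : (1 : ℝ) ≤ q := by exact_mod_cast Nat.one_le_iff_ne_zero.2 hq
  calc suppBound q 0 j 0 = 1 / (q : ℝ) ^ j := by simp [suppBound]
    _ ≤ 1 := div_le_one_of_le₀ (one_le_pow₀ hq1) (by positivity)
    _ ≤ suppCard 0 q g := by exact_mod_cast suppCard_pos hg0

theorem suppBound_le_of_forall_slice (ih : SuppBoundHolds q n)
    (hmem : ∀ k, slice k f ∈ UIcc n q i j) (hne : ∀ k, slice k f ≠ 0) :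
    suppBound q i j (n + 1) ≤ suppCard (n + 1) q f := by
  rw [suppBound_dim_succ, suppCard_succ, Nat.cast_sum]
  calc (q : ℝ) * suppBound q i j n = ∑ _k : Fin q, suppBound q i j n := by simp
    _ ≤ ∑ k, (suppCard n q (slice k f) : ℝ) :=
        sum_le_sum fun k _ => ih i j _ (hmem k) (hne k)

theorem suppBound_le_of_slice (ih : SuppBoundHolds q n) {k : Fin q}
    (hmem : slice k f ∈ UIcc n q i j) (hne : slice k f ≠ 0) :
    suppBound q i (j + 1) (n + 1) ≤ suppCard (n + 1) q f := by
  rw [suppBound_top_succ_dim_succ k.pos.ne']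
  exact (ih i j _ hmem hne).trans (by exact_mod_cast suppCard_slice_le k)

theorem suppBound_le_of_two_slices (ih : SuppBoundHolds q n) {a b : Fin q} (hab : a ≠ b)
    (ha : slice a f ∈ UIcc n q i j) (hb : slice b f ∈ UIcc n q i j)
    (ha0 : slice a f ≠ 0) (hb0 : slice b f ≠ 0) :
    suppBound q (i + 1) (j + 1) (n + 1) ≤ suppCard (n + 1) q f := by
  have hq : q ≠ 0 := a.pos.ne'
  have hpos := suppBound_nonneg (Nat.one_le_iff_ne_zero.2 hq) i (j + 1) n
  calc suppBound q (i + 1) (j + 1) (n + 1) = 2 * (q - 1) * suppBound q i (j + 1) n :=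
        suppBound_succ_succ_succ hq i j n
    _ ≤ 2 * suppBound q i j n := by rw [← mul_suppBound_top_succ hq i j n]; nlinarith
    _ ≤ suppCard n q (slice a f) + suppCard n q (slice b f) := by
        linarith [ih i j _ ha ha0, ih i j _ hb hb0]
    _ ≤ suppCard (n + 1) q f := by exact_mod_cast suppCard_slice_add_slice_le hab

theorem suppBound_le_of_slice_eq_zero (ih : SuppBoundHolds q n)
    (hf : f ∈ UIcc (n + 1) q i (j + 1)) (hf0 : f ≠ 0) {k₀ : Fin q} (hk₀ : slice k₀ f = 0) :
    suppBound q i (j + 1) (n + 1) ≤ suppCard (n + 1) q f := by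
  have hmem : ∀ m, slice m f ∈ UIcc n q (i - 1) j := fun m => by
    simpa [hk₀] using slice_sub_slice_mem_UIcc hf m k₀
  obtain ⟨m, hm⟩ : ∃ m, slice m f ≠ 0 := not_forall.1 (mt eq_zero_of_forall_slice_eq_zero hf0)
  rcases i with _ | i
  · exact suppBound_le_of_slice ih (hmem m) hm
  by_cases hother : ∃ m', m' ≠ m ∧ slice m' f ≠ 0
  · obtain ⟨m', hne, hm'⟩ := hother
    exact suppBound_le_of_two_slices ih hne (hmem m') (hmem m) hm' hm
  push Not at hother
  have hsum : sliceSum f = slice m f := by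
    rw [sliceSum_apply]
    exact sum_eq_single m (fun m' _ h => hother m' h) (by simp)
  have hmem' : slice m f ∈ UIcc n q (i + 1) j :=
    UIcc_succ_inf_UIcc_le m.pos.ne' i j ⟨hsum ▸ sliceSum_mem_UIcc hf, hmem m⟩
  exact suppBound_le_of_slice ih hmem' hm

theorem suppBound_le_of_slices_eq (hq : q ≠ 0) (ih : SuppBoundHolds q n)
    (hf : f ∈ UIcc (n + 1) q i j) (hf0 : f ≠ 0) (h : ∀ a b, slice a f = slice b f) :
    suppBound q i j (n + 1) ≤ suppCard (n + 1) q f := by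
  let k : Fin q := ⟨0, Nat.pos_of_ne_zero hq⟩
  have hk : slice k f ≠ 0 := fun hk =>
    hf0 (eq_zero_of_forall_slice_eq_zero fun m => (h m k).trans hk)
  have hmem : slice k f ∈ UIcc n q i j := by
    have := sliceSum_mem_UIcc hf
    rwa [sliceSum_eq_smul_of_forall_slice_eq fun m => h m k,
      Submodule.smul_mem_iff _ (Nat.cast_ne_zero.2 hq)] at this
  exact suppBound_le_of_forall_slice ih (fun m => h m k ▸ hmem) fun m => h m k ▸ hk

theorem suppBound_le_of_slice_ne_slice (hq : 2 ≤ q) (ih : SuppBoundHolds q n)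
    (hf : f ∈ UIcc (n + 1) q (i + 1) (j + 1)) (hne : ∀ k, slice k f ≠ 0) {a b : Fin q}
    (hab : slice a f ≠ slice b f) :
    suppBound q (i + 1) (j + 1) (n + 1) ≤ suppCard (n + 1) q f := by
  set s : Fin q → ℕ := fun k => suppCard n q (slice k f)
  obtain ⟨k₀, -, hk₀⟩ := exists_min_image univ s ⟨a, mem_univ a⟩
  obtain ⟨k₁, hk₁⟩ : ∃ k₁, slice k₁ f ≠ slice k₀ f := by
    by_cases ha : slice a f = slice k₀ f
    · exact ⟨b, fun hb => hab (ha.trans hb.symm)⟩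
    · exact ⟨a, ha⟩
  set β := suppBound q i (j + 1) n
  have hβ : β ≤ s k₀ := ih _ _ _ (slice_mem_UIcc hf k₀) (hne k₀)
  have hdiff : q * β ≤ s k₁ + s k₀ :=
    calc q * β = suppBound q i j n := mul_suppBound_top_succ (by omega) i j n
      _ ≤ suppCard n q (slice k₁ f - slice k₀ f) :=
          ih _ _ _ (slice_sub_slice_mem_UIcc hf k₁ k₀) (sub_ne_zero.2 hk₁)
      _ ≤ s k₁ + s k₀ := by exact_mod_cast suppCard_sub_le _ _
  have htotal : (s k₁ : ℝ) + (q - 1) * s k₀ ≤ suppCard (n + 1) q f := by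
    have := suppCard_slice_add_mul_le (fun k => hk₀ k (mem_univ k)) k₁
    rw [← Nat.cast_le (α := ℝ)] at this
    push_cast [show 1 ≤ q by omega] at this
    exact this
  have hq' : (0 : ℝ) ≤ q - 2 := sub_nonneg.2 (by exact_mod_cast hq)
  rw [suppBound_succ_succ_succ (by omega)]
  calc 2 * ((q : ℝ) - 1) * β = q * β + (q - 2) * β := by ring
    _ ≤ (s k₁ + s k₀) + (q - 2) * s k₀ := add_le_add hdiff (mul_le_mul_of_nonneg_left hβ hq')
    _ = s k₁ + (q - 1) * s k₀ := by ring
    _ ≤ suppCard (n + 1) q f := htotal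

theorem suppBoundHolds_succ (hq : 2 ≤ q) (ih : SuppBoundHolds q n) :
    SuppBoundHolds q (n + 1) := by
  intro i j f hf hf0
  by_cases hslices : ∀ a b, slice a f = slice b f
  · exact suppBound_le_of_slices_eq (by omega) ih hf hf0 hslices
  push Not at hslices
  obtain ⟨a, b, hab⟩ := hslices
  obtain ⟨j, rfl⟩ : ∃ j', j = j' + 1 := Nat.exists_eq_add_one.2 <| Nat.pos_of_ne_zero
    fun hj => hab (slice_eq_slice_of_mem_UIcc_zero (hj ▸ hf) a b)
  by_cases hzero : ∃ k, slice k f = 0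
  · obtain ⟨k₀, hk₀⟩ := hzero
    exact suppBound_le_of_slice_eq_zero ih hf hf0 hk₀
  push Not at hzero
  rcases i with _ | i
  · exact suppBound_le_of_forall_slice ih (fun k => slice_mem_UIcc hf k) hzero
  · exact suppBound_le_of_slice_ne_slice hq ih hf hzero hab

theorem suppBoundHolds (hq : 2 ≤ q) (n : ℕ) : SuppBoundHolds q n := by
  induction n with
  | zero => exact suppBoundHolds_zero (by omega)
  | succ n ih => exact suppBoundHolds_succ hq ih

end Hamming

theorem min_support_Uij_low_general (n q i j : ℕ) (hq : 3 ≤ q) (hn : i + j ≤ n)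
    (f : (Fin n → Fin q) → ℝ) (hf : f ≠ 0) (hmem : memUI n q i j f) :
    2 ^ i * (q - 1) ^ i * q ^ (n - i - j) ≤ suppCard n q f := by
  have h := Hamming.suppBoundHolds (by omega) n i j f (Hamming.mem_UIcc_of_memUI hmem) hf
  rwa [Hamming.suppBound_eq (by omega) hn, Nat.cast_le] at h

/-- a nonzero f ∈ U_{[i,j]}(n,q), q ≥ 3, i ≤ j ≤ n, n ≥ i+j, has support
of cardinality at least 2^i (q-1)^i q^{n-i-j}. -/
theorem min_support_Uij_low (n q i j : ℕ) (hq : 3 ≤ q) (hij : i ≤ j) (hjn : j ≤ n)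
    (hn : i + j ≤ n)
    (f : (Fin n → Fin q) → ℝ) (hf : f ≠ 0) (hmem : memUI n q i j f) :
    2 ^ i * (q - 1) ^ i * q ^ (n - i - j) ≤ suppCard n q f :=
  min_support_Uij_low_general n q i j hq hn f hf hmem
end

section
/- Let n ≥ i+j and let f = c · ∏_{k=1}^{i} g_k · ∏_{k=1}^{n-i-j} h_k · ∏_{k=1}^{j-i} v_k be a tensor product where c ≠ 0 is a constant, each g_k is a function a₁(s,t) on Σ_q² (value 1 when x=s,y≠t; −1 when y=t,x≠s; 0 otherwise), each h_k is the constant function 1 on Σ_q, and each v_k is an indicator a₄(m) of a point of Σ_q. Then f ∈ U_{[i,j]}(n,q) and the support of f has cardinality exactly 2^i (q-1)^i q^{n-i-j}. -/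
open Finset Function

section Eigen

variable {n q : ℕ}

lemma hammingDist_update_of_ne (x : Fin n → Fin q) (k : Fin n) {b : Fin q} (hb : b ≠ x k) :
    hammingDist x (update x k b) = 1 := by
  rw [hammingDist, Finset.card_eq_one]
  refine ⟨k, Finset.ext fun m => ?_⟩
  by_cases hm : m = k <;> simp [hm, update_of_ne, Ne.symm hb]

lemma exists_eq_update_of_hammingDist_eq_one {x y : Fin n → Fin q} (h : hammingDist x y = 1) :
    ∃ k, ∃ b ≠ x k, y = update x k b := by
  obtain ⟨k, hk⟩ := Finset.card_eq_one.mp h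
  have hdiff : ∀ m, x m ≠ y m ↔ m = k := fun m => by
    simpa using congrArg (m ∈ ·) hk
  refine ⟨k, y k, Ne.symm ((hdiff k).mpr rfl), funext fun m => ?_⟩
  by_cases hm : m = k
  · subst hm; simp
  · rw [update_of_ne hm]
    exact (not_not.mp (mt (hdiff m).mp hm)).symm

lemma adjSum_eq_sum_update (F : (Fin n → Fin q) → ℝ) (x : Fin n → Fin q) :
    adjSum n q F x = ∑ k, ∑ b ∈ univ.erase (x k), F (update x k b) := by
  rw [adjSum, ← Finset.sum_filter, Finset.sum_sigma']
  symm
  refine Finset.sum_bij (fun p _ => update x p.1 p.2) (fun p hp => ?_) (fun p hp p' hp' h => ?_)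
    (fun y hy => ?_) (fun _ _ => rfl)
  · simp only [Finset.mem_sigma, Finset.mem_erase] at hp
    simpa using hammingDist_update_of_ne x p.1 hp.2.1
  · simp only [Finset.mem_sigma, Finset.mem_erase] at hp hp'
    have hk : p.1 = p'.1 := by
      by_contra hne
      have := congrFun h p.1
      rw [update_self, update_of_ne hne] at this
      exact hp.2.1 this
    obtain ⟨k, b⟩ := p
    obtain ⟨k', b'⟩ := p'
    obtain rfl : k = k' := hk
    simpa using congrFun h k
  · obtain ⟨k, b, hb, rfl⟩ := exists_eq_update_of_hammingDist_eq_one (Finset.mem_filter.mp hy).2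
    exact ⟨⟨k, b⟩, by simpa using hb, rfl⟩

lemma adjSum_eq_sum_sub (F : (Fin n → Fin q) → ℝ) (x : Fin n → Fin q) :
    adjSum n q F x = ∑ k, (∑ b, F (update x k b) - F x) := by
  rw [adjSum_eq_sum_update]
  refine Finset.sum_congr rfl fun k _ => ?_
  rw [Finset.sum_erase_eq_sub (Finset.mem_univ _), update_eq_self]

theorem memU_prod_of_sum_eq_zero (T : Finset (Fin n)) (φ : Fin n → Fin q → ℝ)
    (hφ : ∀ m ∈ T, ∑ a, φ m a = 0) :
    memU n q #T (fun x => ∏ m ∈ T, φ m (x m)) := by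
  intro x
  set F : (Fin n → Fin q) → ℝ := fun y => ∏ m ∈ T, φ m (y m)
  have hcoord : ∀ k, ∑ b, F (update x k b) - F x
      = ((q - 1) - q * if k ∈ T then 1 else 0) * F x := by
    intro k
    by_cases hk : k ∈ T
    · have hsplit : ∀ b, F (update x k b) = φ k b * ∏ m ∈ T.erase k, φ m (x m) := fun b => by
        rw [show F (update x k b) = _ from (Finset.mul_prod_erase T _ hk).symm, update_self]
        congr 1
        exact Finset.prod_congr rfl fun m hm => by rw [update_of_ne (Finset.ne_of_mem_erase hm)]
      simp only [hsplit, ← Finset.sum_mul, hφ k hk, hk, if_true]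
      ring
    · have hconst : ∀ b, F (update x k b) = F x := fun b =>
        Finset.prod_congr rfl fun m hm => by rw [update_of_ne (ne_of_mem_of_not_mem hm hk)]
      simp only [hconst, Finset.sum_const, Finset.card_univ, Fintype.card_fin, nsmul_eq_mul, hk,
        if_false]
      ring
  rw [adjSum_eq_sum_sub, Finset.sum_congr rfl fun k _ => hcoord k, ← Finset.sum_mul,
    Finset.sum_sub_distrib, ← Finset.mul_sum, Finset.sum_boole]
  simp only [Finset.filter_univ_mem, Finset.sum_const, Finset.card_univ, Fintype.card_fin,
    nsmul_eq_mul]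

noncomputable def hammingAdj (n q : ℕ) : Module.End ℝ ((Fin n → Fin q) → ℝ) :=
  Matrix.toLin' (Matrix.of fun x y => if hammingDist x y = 1 then 1 else 0)

lemma memU_iff_mem_eigenspace {t : ℕ} {f : (Fin n → Fin q) → ℝ} :
    memU n q t f ↔ f ∈ (hammingAdj n q).eigenspace (n * (q - 1) - q * t) := by
  simp [memU, IsEigenfun, adjSum, hammingAdj, funext_iff, Matrix.mulVec, dotProduct, ite_mul]

lemma memUI_sum {i j : ℕ} {α : Type*} (A : Finset α) (d : α → ℕ)
    (F : α → (Fin n → Fin q) → ℝ) (hd : ∀ a ∈ A, d a ∈ Icc i j)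
    (hF : ∀ a ∈ A, memU n q (d a) (F a)) : memUI n q i j (∑ a ∈ A, F a) := by
  refine ⟨fun t => ∑ a ∈ A with d a = t, F a, fun t _ => ?_,
    (Finset.sum_fiberwise_of_maps_to hd F).symm⟩
  refine memU_iff_mem_eigenspace.mpr (Submodule.sum_mem _ fun a ha => ?_)
  obtain ⟨haA, rfl⟩ := Finset.mem_filter.mp ha
  exact memU_iff_mem_eigenspace.mp (hF a haA)

theorem memU_const_mul_prod_comp {ι : Type*} (e : ι ↪ Fin n) (T : Finset ι) (c : ℝ)
    (φ : ι → Fin q → ℝ) (hφ : ∀ z ∈ T, ∑ a, φ z a = 0) :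
    memU n q #T (fun x => c * ∏ z ∈ T, φ z (x (e z))) := by
  have hprod := memU_prod_of_sum_eq_zero (T.map e) (extend e φ 0) (by
    simpa [e.injective.extend_apply] using hφ)
  rw [Finset.card_map, memU_iff_mem_eigenspace] at hprod
  refine memU_iff_mem_eigenspace.mpr
    (show c • (fun x : Fin n → Fin q => ∏ z ∈ T, φ z (x (e z))) ∈ _ from ?_)
  simpa [e.injective.extend_apply] using Submodule.smul_mem _ c hprod

end Eigen

section Tensor

variable {q : ℕ} {κ ν : Type*}

noncomputable def centeredIndicator (m : Fin q) (a : Fin q) : ℝ :=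
  (if a = m then 1 else 0) - (q : ℝ)⁻¹

lemma sum_centeredIndicator (m : Fin q) : ∑ a, centeredIndicator m a = 0 := by
  have hq : (q : ℝ) ≠ 0 := Nat.cast_ne_zero.mpr m.pos.ne'
  simp [centeredIndicator, Finset.sum_sub_distrib, hq]

/-- The function `a₁(s,t)` of the paper. -/
def crossSign (s t a b : Fin q) : ℝ :=
  if a = s ∧ b ≠ t then 1 else if b = t ∧ a ≠ s then -1 else 0

lemma crossSign_eq_sub (s t a b : Fin q) :
    crossSign s t a b = centeredIndicator s a - centeredIndicator t b := by
  unfold crossSign centeredIndicator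
  by_cases ha : a = s <;> by_cases hb : b = t <;> simp [ha, hb]
  ring

noncomputable def zeroSumPart (s t : κ → Fin q) (ms : ν → Fin q) :
    (κ × Fin 2) ⊕ ν → Fin q → ℝ
  | .inl (k, b) => ![centeredIndicator (s k), -centeredIndicator (t k)] b
  | .inr l => centeredIndicator (ms l)

lemma sum_zeroSumPart (s t : κ → Fin q) (ms : ν → Fin q) (z : (κ × Fin 2) ⊕ ν) :
    ∑ a, zeroSumPart s t ms z a = 0 := by
  rcases z with ⟨k, b⟩ | l
  · fin_cases b <;> simp [zeroSumPart, sum_centeredIndicator]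
  · exact sum_centeredIndicator _

/-- In the term `(σ, S)` of `crossTensor_eq_sum`, `σ k` picks the coordinate of the pair `k` that
carries its zero-sum factor, and `S` the indicator coordinates that carry theirs. -/
def activeSet [Fintype κ] (σ : κ → Fin 2) (S : Finset ν) : Finset ((κ × Fin 2) ⊕ ν) :=
  (univ.map ⟨fun k => (k, σ k), fun _ _ h => congrArg Prod.fst h⟩).disjSum S

lemma card_activeSet [Fintype κ] (σ : κ → Fin 2) (S : Finset ν) :
    #(activeSet σ S) = Fintype.card κ + #S := by
  simp [activeSet]

variable [Fintype κ] [Fintype ν]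

/-- `c · ⊗ₖ a₁(sₖ,tₖ) ⊗ ⊗ₗ a₄(mₗ)`, the constant factors `h` left out. -/
noncomputable def crossTensor (c : ℝ) (s t : κ → Fin q) (ms : ν → Fin q)
    (u : (κ × Fin 2) ⊕ ν → Fin q) : ℝ :=
  c * ((∏ k, crossSign (s k) (t k) (u (.inl (k, 0))) (u (.inl (k, 1)))) *
    ∏ l, if u (.inr l) = ms l then 1 else 0)

lemma crossTensor_eq_sum [DecidableEq κ] [DecidableEq ν] (c : ℝ) (s t : κ → Fin q)
    (ms : ν → Fin q) (u : (κ × Fin 2) ⊕ ν → Fin q) :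
    crossTensor c s t ms u = ∑ σ : κ → Fin 2, ∑ S : Finset ν,
      c * (q : ℝ)⁻¹ ^ #Sᶜ * ∏ z ∈ activeSet σ S, zeroSumPart s t ms z (u z) := by
  set g := fun z => zeroSumPart s t ms z (u z)
  have hcross : ∀ k, crossSign (s k) (t k) (u (.inl (k, 0))) (u (.inl (k, 1)))
      = ∑ b, g (.inl (k, b)) := fun k => by
    simp [g, Fin.sum_univ_two, zeroSumPart, crossSign_eq_sub, sub_eq_add_neg]
  have hind : ∀ l, (if u (.inr l) = ms l then (1 : ℝ) else 0) = g (.inr l) + (q : ℝ)⁻¹ :=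
    fun l => by simp [g, zeroSumPart, centeredIndicator]
  simp only [crossTensor, hcross, hind, Fintype.prod_sum, Fintype.prod_add, Finset.prod_const,
    Finset.sum_mul_sum, activeSet, Finset.prod_disjSum, Finset.prod_map]
  rw [Finset.mul_sum]
  refine Finset.sum_congr rfl fun σ _ => ?_
  rw [Finset.mul_sum]
  refine Finset.sum_congr rfl fun S _ => ?_
  change _ = _ * ((∏ k, g (.inl (k, σ k))) * _)
  ring

theorem memUI_crossTensor_comp [DecidableEq κ] [DecidableEq ν] {n : ℕ}
    (e : (κ × Fin 2) ⊕ ν ↪ Fin n) (c : ℝ) (s t : κ → Fin q) (ms : ν → Fin q) :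
    memUI n q (Fintype.card κ) (Fintype.card κ + Fintype.card ν)
      (fun x => crossTensor c s t ms fun z => x (e z)) := by
  have hsum : (fun x : Fin n → Fin q => crossTensor c s t ms fun z => x (e z))
      = ∑ p : (κ → Fin 2) × Finset ν, fun x : Fin n → Fin q =>
          c * (q : ℝ)⁻¹ ^ #p.2ᶜ * ∏ z ∈ activeSet p.1 p.2, zeroSumPart s t ms z (x (e z)) := by
    ext x
    simp only [crossTensor_eq_sum, Finset.sum_apply, Fintype.sum_prod_type]
  rw [hsum]
  refine memUI_sum _ (fun p => Fintype.card κ + #p.2) _ (fun p _ => ?_) (fun p _ => ?_)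
  · have := Finset.card_le_univ p.2
    exact Finset.mem_Icc.mpr ⟨by omega, by omega⟩
  · rw [← card_activeSet p.1]
    exact memU_const_mul_prod_comp e _ _ _ fun z _ => sum_zeroSumPart s t ms z

end Tensor

section Support

lemma natCard_support_mul {α β : Type*} (F : α → ℝ) (G : β → ℝ) :
    Nat.card {p : α × β // F p.1 * G p.2 ≠ 0}
      = Nat.card {a // F a ≠ 0} * Nat.card {b // G b ≠ 0} := by
  rw [← Nat.card_prod]
  exact Nat.card_congr ((Equiv.subtypeEquivRight fun p => mul_ne_zero_iff).trans
    (Equiv.subtypeProdEquivProd (p := fun a => F a ≠ 0) (q := fun b => G b ≠ 0)))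

lemma natCard_support_prod {ι α : Type*} [Fintype ι] (F : ι → α → ℝ) :
    Nat.card {u : ι → α // ∏ k, F k (u k) ≠ 0} = ∏ k, Nat.card {a // F k a ≠ 0} := by
  rw [← Nat.card_pi]
  exact Nat.card_congr ((Equiv.subtypeEquivRight fun u => by simp [Finset.prod_ne_zero_iff]).trans
    (Equiv.subtypePiEquivPi (p := fun k a => F k a ≠ 0)))

lemma natCard_support_comp_sumInl {α β γ δ : Type*} (E : α ⊕ β ≃ δ) (G : (α → γ) → ℝ) :
    Nat.card {x : δ → γ // G (fun a => x (E (.inl a))) ≠ 0}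
      = Nat.card {u // G u ≠ 0} * Nat.card (β → γ) := by
  rw [← Nat.card_prod]
  exact Nat.card_congr ((((E.arrowCongr (Equiv.refl γ)).symm.trans
    (Equiv.sumArrowEquivProdArrow α β γ)).subtypeEquiv
      (q := fun p => G p.1 ≠ 0) fun x => Iff.rfl).trans
    (Equiv.prodSubtypeFstEquivSubtypeProd (p := fun u => G u ≠ 0)))

variable {q : ℕ}

lemma natCard_support_crossSign (s t : Fin q) :
    Nat.card {v : Fin 2 → Fin q // crossSign s t (v 0) (v 1) ≠ 0} = 2 * (q - 1) := by
  rw [Nat.card_congr ((piFinTwoEquiv fun _ => Fin q).subtypeEquiv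
      (p := fun v => crossSign s t (v 0) (v 1) ≠ 0) (q := fun p => crossSign s t p.1 p.2 ≠ 0)
      fun v => Iff.rfl),
    Nat.card_eq_fintype_card, Fintype.card_subtype]
  have hsupp : ({p : Fin q × Fin q | crossSign s t p.1 p.2 ≠ 0} : Finset _)
      = ({s} ×ˢ univ.erase t) ∪ (univ.erase s ×ˢ {t}) := by
    ext ⟨a, b⟩
    grind [crossSign]
  rw [hsupp, Finset.card_union_of_disjoint]
  · simp [Finset.card_erase_of_mem]
    omega
  · simp +contextual [Finset.disjoint_left, eq_comm]

lemma natCard_support_indicator (m : Fin q) :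
    Nat.card {a : Fin q // (if a = m then (1 : ℝ) else 0) ≠ 0} = 1 := by
  simp

lemma natCard_support_crossTensor {κ ν : Type*} [Fintype κ] [Fintype ν] {c : ℝ} (hc : c ≠ 0)
    (s t : κ → Fin q) (ms : ν → Fin q) :
    Nat.card {u // crossTensor c s t ms u ≠ 0} = (2 * (q - 1)) ^ Fintype.card κ := by
  let e : ((κ × Fin 2) ⊕ ν → Fin q) ≃ (κ → Fin 2 → Fin q) × (ν → Fin q) :=
    (Equiv.sumArrowEquivProdArrow _ _ _).trans ((Equiv.curry _ _ _).prodCongr (Equiv.refl _))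
  rw [Nat.card_congr (e.subtypeEquiv (q := fun p =>
      (∏ k, crossSign (s k) (t k) (p.1 k 0) (p.1 k 1)) *
        (∏ l, if p.2 l = ms l then (1 : ℝ) else 0) ≠ 0) fun u => by simp [e, crossTensor, hc]),
    natCard_support_mul (fun v : κ → Fin 2 → Fin q => ∏ k, crossSign (s k) (t k) (v k 0) (v k 1))
      (fun w : ν → Fin q => ∏ l, if w l = ms l then (1 : ℝ) else 0),
    natCard_support_prod (fun k (v : Fin 2 → Fin q) => crossSign (s k) (t k) (v 0) (v 1)),
    natCard_support_prod (fun l a => if a = ms l then (1 : ℝ) else 0)]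
  simp only [natCard_support_crossSign, natCard_support_indicator, Finset.prod_const,
    Finset.card_univ, one_pow, mul_one]

end Support

section Blocks

variable {n i j : ℕ}

def blockEquiv (hij : i ≤ j) (hn : i + j ≤ n) :
    ((Fin i × Fin 2) ⊕ Fin (j - i)) ⊕ Fin (n - i - j) ≃ Fin n :=
  (Equiv.sumAssoc _ _ _).trans <| ((Equiv.refl _).sumCongr (Equiv.sumComm _ _)).trans <|
    (Equiv.sumAssoc _ _ _).symm.trans <|
      ((((finProdFinEquiv.sumCongr (Equiv.refl _)).trans finSumFinEquiv).sumCongr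
        (Equiv.refl _)).trans finSumFinEquiv).trans (finCongr (by omega))

variable (hij : i ≤ j) (hn : i + j ≤ n)

lemma blockEquiv_pair_zero (k : Fin i) :
    blockEquiv hij hn (.inl (.inl (k, 0))) = ⟨2 * k, by omega⟩ := by
  ext; simp [blockEquiv]

lemma blockEquiv_pair_one (k : Fin i) :
    blockEquiv hij hn (.inl (.inl (k, 1))) = ⟨2 * k + 1, by omega⟩ := by
  ext; simp [blockEquiv]; ring

lemma blockEquiv_point (l : Fin (j - i)) :
    blockEquiv hij hn (.inl (.inr l)) = ⟨2 * i + (n - i - j) + l, by omega⟩ := by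
  ext; simp [blockEquiv]; ring

end Blocks

/-- for n ≥ i+j, the tensor product of a nonzero constant c, i functions
a₁(s_k,t_k) (on coordinate pairs), n-i-j constant-1 functions and j-i indicators a₄(m_k)
lies in U_{[i,j]}(n,q) and has support of cardinality exactly 2^i (q-1)^i q^{n-i-j}. -/
theorem construction_F1 (n q i j : ℕ) (hij : i ≤ j) (hn : i + j ≤ n)
    (c : ℝ) (hc : c ≠ 0) (s t : Fin i → Fin q) (ms : Fin (j - i) → Fin q)
    (f : (Fin n → Fin q) → ℝ)
    (hf : f = fun x => c *
      (∏ k : Fin i,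
        (if x ⟨2 * (k : ℕ), by have := k.isLt; omega⟩ = s k ∧
              x ⟨2 * (k : ℕ) + 1, by have := k.isLt; omega⟩ ≠ t k then (1 : ℝ)
          else if x ⟨2 * (k : ℕ) + 1, by have := k.isLt; omega⟩ = t k ∧
              x ⟨2 * (k : ℕ), by have := k.isLt; omega⟩ ≠ s k then -1
          else 0)) *
      (∏ k : Fin (n - i - j), (1 : ℝ)) *
      (∏ k : Fin (j - i),
        (if x ⟨2 * i + (n - i - j) + (k : ℕ), by have := k.isLt; omega⟩ = ms k
          then (1 : ℝ) else 0))) :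
    memUI n q i j f ∧ suppCard n q f = 2 ^ i * (q - 1) ^ i * q ^ (n - i - j) := by
  set E := blockEquiv hij hn
  have hfE : f = fun x => crossTensor c s t ms fun z => x (E (.inl z)) := by
    rw [hf]
    simp only [crossTensor, crossSign, E, blockEquiv_pair_zero, blockEquiv_pair_one,
      blockEquiv_point, Finset.prod_const_one, mul_one, mul_assoc]
  constructor
  · have h := memUI_crossTensor_comp (Function.Embedding.inl.trans E.toEmbedding) c s t ms
    rw [Fintype.card_fin, Fintype.card_fin, Nat.add_sub_cancel' hij] at h
    rw [hfE]
    exact h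
  · rw [suppCard, hfE, natCard_support_comp_sumInl E, natCard_support_crossTensor hc]
    simp [Nat.card_eq_fintype_card, mul_pow]
end
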